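/- arXiv:1806.05342 — 2 statements merged into one kernel-verified Lean document; each statement's English description precedes it below -/
import Mathlib

section
/- If A, B, C are full subcategories of a triangulated category D, then the star operation is associative: (A ∗ B) ∗ C = A ∗ (B ∗ C), where A ∗ B is the full subcategory of objects x admitting a distinguished triangle a → x → b → a[1] with a ∈ A and b ∈ B. -/
open CategoryTheory CategoryTheory.Limits CategoryTheory.Pretriangulated
  CategoryTheory.Triangulated

universe v u

namespace GluePaper

variable {C : Type u} [Category.{v} C] [Preadditive C] [HasZeroObject C]
  [HasShift C ℤ] [∀ (n : ℤ), (shiftFunctor C n).Additive] [Pretriangulated C]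

/-- `star A B` is the full subcategory `A ∗ B` of objects `x` admitting a distinguished
triangle `a → x → b → a⟦1⟧` with `a ∈ A` and `b ∈ B`. -/
def star (A B : Set C) : Set C :=
  {x | ∃ (a b : C) (f : a ⟶ x) (g : x ⟶ b) (h : b ⟶ a⟦(1 : ℤ)⟧),
    Triangle.mk f g h ∈ (distTriang C) ∧ a ∈ A ∧ b ∈ B}

/-- There exists a distinguished triangle `E → X → D' → E⟦1⟧`. -/
def triExists (E X D' : C) : Prop :=
  ∃ (f : E ⟶ X) (g : X ⟶ D') (h : D' ⟶ E⟦(1 : ℤ)⟧),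
    Triangle.mk f g h ∈ distTriang C

/-- `smd S` consists of all direct summands of objects of `S`. -/
def smd (S : Set C) : Set C :=
  {X | ∃ (Y : C) (_ : Y ∈ S) (ι : X ⟶ Y) (π : Y ⟶ X), ι ≫ π = 𝟙 X}

/-- `addClosure S₀ = Add(S₀)`: all coproducts of objects of `S₀` (up to isomorphism). -/
def addClosure (S₀ : Set C) : Set C :=
  {X | ∃ (J : Type v) (f : J → C) (c : Cofan f), Nonempty (IsColimit c) ∧
    (∀ j, f j ∈ S₀) ∧ Nonempty (X ≅ c.pt)}

/-- `S` is closed under (small) coproducts. -/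
def coprodClosed (S : Set C) : Prop :=
  ∀ (J : Type v) (f : J → C) (c : Cofan f), Nonempty (IsColimit c) →
    (∀ j, f j ∈ S) → c.pt ∈ S

/-- `Coprod(S₀)`: the smallest full subcategory containing `S₀`, closed under coproducts
and under extensions. -/
def coprodClosure (S₀ : Set C) : Set C :=
  ⋂₀ {S : Set C | S₀ ⊆ S ∧ coprodClosed S ∧ star S S ⊆ S}

/-- The smallest full subcategory containing `S₀`, closed under coproducts, extensions and
direct summands. -/
def coprodSmdClosure (S₀ : Set C) : Set C :=
  ⋂₀ {S : Set C | S₀ ⊆ S ∧ coprodClosed S ∧ star S S ⊆ S ∧ smd S ⊆ S}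

/-- `G[A,B]`: the objects `Σ^{-i} G = G⟦-i⟧` for `A ≤ i ≤ B`. -/
def shiftSet (G : C) (A B : ℤ) : Set C :=
  {X | ∃ i : ℤ, A ≤ i ∧ i ≤ B ∧ Nonempty (X ≅ G⟦-i⟧)}

/-- `G(-∞,B]`: the objects `Σ^{-i} G = G⟦-i⟧` for `i ≤ B`. -/
def shiftSetLE (G : C) (B : ℤ) : Set C :=
  {X | ∃ i : ℤ, i ≤ B ∧ Nonempty (X ≅ G⟦-i⟧)}

/-- `Coprod_n(S₀)`, defined inductively: `Coprod_1(S₀) = Add(S₀)` and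
`Coprod_{n+1}(S₀) = Add(S₀) ∗ Coprod_n(S₀)`.  (With the convention that
`Coprod_0(S₀)` consists of the zero objects.) -/
def coprodN (S₀ : Set C) : ℕ → Set C
  | 0 => {X | IsZero X}
  | n + 1 => star (addClosure S₀) (coprodN S₀ n)

/-- `⟨G⟩_n^{[A,B]} = smd(Coprod_n(G[A,B]))`. -/
def shovel (G : C) (n : ℕ) (A B : ℤ) : Set C := smd (coprodN (shiftSet G A B) n)

/-- `⟨G⟩^{[A,B]} = smd(Coprod(G[A,B]))`. -/
def shovelInf (G : C) (A B : ℤ) : Set C := coprodSmdClosure (shiftSet G A B)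

/-- The aisle `D_G^{≤0} = Coprod(G(-∞,0])` of the t-structure generated by `G`. -/
def genAisle (G : C) : Set C := coprodClosure (shiftSetLE G 0)

/-- An object `X` is compact if `Hom(X,-)` commutes with coproducts. -/
def IsCompactObj (X : C) : Prop :=
  ∀ J : Type v, Nonempty (PreservesColimitsOfShape (Discrete J)
    (preadditiveCoyoneda.obj (Opposite.op X)))

/-- `G` is a compact generator. -/
def IsCompactGenerator (G : C) : Prop :=
  IsCompactObj G ∧ ∀ X : C, (∀ (n : ℤ) (f : G⟦n⟧ ⟶ X), f = 0) → IsZero X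

/-- `Hom(Σ^{-n}G, H) = 0` for all `n ≫ 0`. -/
def homVanishEventually (G H : C) : Prop :=
  ∃ N : ℤ, ∀ n ≥ N, ∀ f : G⟦-n⟧ ⟶ H, f = 0

/-- Two t-structures are equivalent if there is `A > 0` with
`D₁^{≤ -A} ⊆ D₂^{≤ 0} ⊆ D₁^{≤ A}`. -/
def tEquiv (t₁ t₂ : TStructure C) : Prop :=
  ∃ A : ℤ, 0 < A ∧ (∀ X : C, t₁.le (-A) X → t₂.le 0 X) ∧
    (∀ X : C, t₂.le 0 X → t₁.le A X)

/-- The t-structure `t` lies in the preferred equivalence class: it is equivalent to the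
t-structure generated by the compact generator `G`, whose aisle is `Coprod(G(-∞,0])`
(recall `X ∈ D_G^{≤ n}` iff `X⟦n⟧ ∈ Coprod(G(-∞,0])`). -/
def inPreferred (G : C) (t : TStructure C) : Prop :=
  ∃ A : ℤ, 0 < A ∧ (∀ X : C, X⟦(-A : ℤ)⟧ ∈ genAisle G → t.le 0 X) ∧
    (∀ X : C, t.le 0 X → X⟦(A : ℤ)⟧ ∈ genAisle G)

/-- `t` lies in the preferred equivalence class of t-structures (for some, equivalently any,
compact generator). -/
def inPreferredClass (t : TStructure C) : Prop :=
  ∃ G : C, IsCompactGenerator G ∧ inPreferred G t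

/-- Weak approximability of a triangulated category with coproducts. -/
def IsWeaklyApproximable : Prop :=
  ∃ (G : C) (t : TStructure C) (A : ℕ), 0 < A ∧ IsCompactGenerator G ∧
    t.le 0 (G⟦(A : ℤ)⟧) ∧
    (∀ X : C, t.le 0 X → ∀ f : G⟦(-A : ℤ)⟧ ⟶ X, f = 0) ∧
    (∀ X : C, t.le 0 X → ∃ E D' : C,
      E ∈ shovelInf G (-(A : ℤ)) (A : ℤ) ∧ t.le (-1) D' ∧ triExists E X D')

/-- Approximability of a triangulated category with coproducts. -/
def IsApproximable : Prop :=
  ∃ (G : C) (t : TStructure C) (A : ℕ), 0 < A ∧ IsCompactGenerator G ∧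
    t.le 0 (G⟦(A : ℤ)⟧) ∧
    (∀ X : C, t.le 0 X → ∀ f : G⟦(-A : ℤ)⟧ ⟶ X, f = 0) ∧
    (∀ X : C, t.le 0 X → ∃ E D' : C,
      E ∈ shovel G A (-(A : ℤ)) (A : ℤ) ∧ t.le (-1) D' ∧ triExists E X D')

/-- `D^- = ⋃ D^{≤ m}`. -/
def Dminus (t : TStructure C) : Set C := {X | ∃ m : ℤ, t.le m X}

/-- `D^+ = ⋃ D^{≥ -m}`. -/
def Dplus (t : TStructure C) : Set C := {X | ∃ m : ℤ, t.ge m X}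

/-- `D^-_c`: objects `X` such that for every `m > 0` there is a distinguished triangle
`E → X → E'` with `E` compact and `E' ∈ D^{≤ -m}`. -/
def DminusC (t : TStructure C) : Set C :=
  {X | ∀ m : ℤ, 0 < m → ∃ E E' : C, IsCompactObj E ∧ t.le (-m) E' ∧ triExists E X E'}

/-- `D^b_c = D^-_c ∩ D^b`. -/
def DbC (t : TStructure C) : Set C := DminusC t ∩ (Dminus t ∩ Dplus t)

/-- A set of objects is a thick triangulated subcategory. -/
def IsThickTriangulated (S : Set C) : Prop :=
  (∀ X : C, IsZero X → X ∈ S) ∧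
  (∀ X ∈ S, ∀ n : ℤ, X⟦n⟧ ∈ S) ∧
  (∀ T ∈ distTriang C, T.obj₁ ∈ S → T.obj₂ ∈ S → T.obj₃ ∈ S) ∧
  smd S ⊆ S


/-- `star` is Mathlib's `ObjectProperty.extensionProduct`, read through `Set C = (C → Prop)`. -/
theorem star_assoc [IsTriangulated C] (A B E : Set C) :
    star (star A B) E = star A (star B E) :=
  ObjectProperty.extensionProduct_assoc A B E

end GluePaper
end

section
/- Let D be a triangulated category with coproducts and G an object of D. Then the subcategory Coprod(G(-∞, 0]) — the smallest full subcategory S of D closed under coproducts, with S ∗ S ⊆ S, and containing all Σ^{-i}G for i ≤ 0 — is closed under direct summands. Consequently smd(Coprod(G(-∞,0])) = Coprod(G(-∞,0]). -/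
open CategoryTheory CategoryTheory.Limits CategoryTheory.Pretriangulated
  CategoryTheory.Triangulated

universe v u

namespace GluePaper

variable {C : Type u} [Category.{v} C] [Preadditive C] [HasZeroObject C]
  [HasShift C ℤ] [∀ (n : ℤ), (shiftFunctor C n).Additive] [Pretriangulated C]

/-! If `X` is a retract of `Y`, an Eilenberg swindle identifies `Q = ∐ₙ Y` (countably many
copies) with the biproduct `Q ⊞ X`, without splitting the idempotent of `Y`. Rotating the split
triangle `Q → Q ⊞ X → X → Q⟦1⟧` exhibits `X` as an extension of `Q⟦1⟧` by `Q ⊞ X ≅ Q`. So a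
subcategory closed under coproducts, extensions and `Σ` is closed under summands, and
`Coprod(G(-∞,0])` is closed under `Σ` because `Σ` maps `G(-∞,0]` into itself. -/

universe w

section Swindle

variable {A : Type*} [Category A] [Preadditive A] {X Y : A} (h : Retract X Y)
  [HasCoproduct fun _ : ULift.{w} ℕ => Y]

/-- With `e = h.r ≫ h.i`, think of `Y` as `X ⊕ ker e`: the structure maps move the `X`-parts
of `∐ₙ Y` one slot up or down, freeing slot `0` for the extra copy of `X`. Reducible so that
`simp` sees the point as the coproduct. -/
@[reducible]
noncomputable def swindleBicone : BinaryBicone (∐ fun _ : ULift.{w} ℕ => Y) X where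
  pt := ∐ fun _ : ULift.{w} ℕ => Y
  fst := Sigma.desc fun n => (𝟙 Y - h.r ≫ h.i) ≫ Sigma.ι (fun _ : ULift.{w} ℕ => Y) n +
    match n with
    | ⟨0⟩ => 0
    | ⟨m + 1⟩ => h.r ≫ h.i ≫ Sigma.ι (fun _ : ULift.{w} ℕ => Y) ⟨m⟩
  snd := Sigma.desc fun n => match n with
    | ⟨0⟩ => h.r
    | ⟨_ + 1⟩ => 0
  inl := Sigma.desc fun n => (𝟙 Y - h.r ≫ h.i) ≫ Sigma.ι (fun _ : ULift.{w} ℕ => Y) n +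
    h.r ≫ h.i ≫ Sigma.ι (fun _ : ULift.{w} ℕ => Y) ⟨n.down + 1⟩
  inr := h.i ≫ Sigma.ι (fun _ : ULift.{w} ℕ => Y) ⟨0⟩
  inl_fst := by ext ⟨_ | m⟩ <;> simp [Preadditive.sub_comp, Preadditive.comp_sub]
  inl_snd := by ext ⟨_ | m⟩ <;> simp [Preadditive.sub_comp]
  inr_fst := by simp [Preadditive.sub_comp]
  inr_snd := by simp

noncomputable def swindleBiconeIsBilimit : (swindleBicone h).IsBilimit :=
  isBinaryBilimitOfTotal _ <| by ext ⟨_ | m⟩ <;> simp [Preadditive.sub_comp]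

end Swindle

section

variable {D : Type*} [Category D]

lemma coprodClosed.mem_of_iso {S : Set D} (hS : coprodClosed S) {X Y : D} (e : X ≅ Y)
    (hY : Y ∈ S) : X ∈ S :=
  hS PUnit (fun _ => Y) _ ⟨Cofan.isColimitMkOfUnique e.symm PUnit⟩ fun _ => hY

variable [HasShift D ℤ]

lemma coprodClosed.preimage_shift {S : Set D} (hS : coprodClosed S) (n : ℤ) :
    coprodClosed {Z : D | Z⟦n⟧ ∈ S} :=
  fun _ f c ⟨hc⟩ hf => hS _ _ _ ⟨isColimitCofanMkObjOfIsColimit (shiftFunctor D n) f c.inj hc⟩ hf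

lemma shift_mem_shiftSetLE {G X : D} {B n : ℤ} (hX : X ∈ shiftSetLE G B) (hn : 0 ≤ n) :
    X⟦n⟧ ∈ shiftSetLE G B := by
  obtain ⟨i, hi, ⟨e⟩⟩ := hX
  exact ⟨i - n, by omega,
    ⟨(shiftFunctor D n).mapIso e ≪≫ (shiftFunctorAdd' D (-i) n (-(i - n)) (by ring)).symm.app G⟩⟩

end

lemma mem_star_of_biprod {S T : Set C} {P X : C} (h : (P ⊞ X) ∈ S) (hP : P⟦(1 : ℤ)⟧ ∈ T) :
    X ∈ star S T :=
  ⟨_, _, _, _, _, rot_of_distTriang _ (binaryBiproductTriangle_distinguished P X), h, hP⟩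

lemma shift_mem_star {S T : Set C} {X : C} (n : ℤ)
    (hX : X ∈ star {Z | Z⟦n⟧ ∈ S} {Z | Z⟦n⟧ ∈ T}) : X⟦n⟧ ∈ star S T := by
  obtain ⟨a, b, f, g, h, hT, ha, hb⟩ := hX
  exact ⟨_, _, _, _, _, Triangle.shift_distinguished _ hT n, ha, hb⟩

lemma subset_coprodClosure (S₀ : Set C) : S₀ ⊆ coprodClosure S₀ :=
  fun _ hX => Set.mem_sInter.2 fun _ hS => hS.1 hX

lemma coprodClosure_subset_of {S₀ S : Set C} (h₀ : S₀ ⊆ S) (hc : coprodClosed S)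
    (hstar : star S S ⊆ S) : coprodClosure S₀ ⊆ S :=
  Set.sInter_subset_of_mem ⟨h₀, hc, hstar⟩

lemma coprodClosed_coprodClosure (S₀ : Set C) : coprodClosed (coprodClosure S₀) :=
  fun J f c hc hf => Set.mem_sInter.2 fun S hS =>
    hS.2.1 J f c hc fun j => Set.mem_sInter.1 (hf j) S hS

lemma star_coprodClosure_subset (S₀ : Set C) :
    star (coprodClosure S₀) (coprodClosure S₀) ⊆ coprodClosure S₀ := by
  rintro X ⟨a, b, f, g, h, hT, ha, hb⟩
  exact Set.mem_sInter.2 fun S hS =>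
    hS.2.2 ⟨a, b, f, g, h, hT, Set.mem_sInter.1 ha S hS, Set.mem_sInter.1 hb S hS⟩

lemma shift_mem_coprodClosure {S₀ : Set C} (n : ℤ) (h₀ : ∀ X ∈ S₀, X⟦n⟧ ∈ coprodClosure S₀)
    {X : C} (hX : X ∈ coprodClosure S₀) : X⟦n⟧ ∈ coprodClosure S₀ :=
  coprodClosure_subset_of (S := {Z | Z⟦n⟧ ∈ coprodClosure S₀}) h₀
    ((coprodClosed_coprodClosure S₀).preimage_shift n)
    (fun _ hZ => star_coprodClosure_subset S₀ (shift_mem_star n hZ)) hX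

lemma smd_subset_of_shift_mem [HasCountableCoproducts C] {S : Set C} (hc : coprodClosed S)
    (hstar : star S S ⊆ S) (hshift : ∀ X ∈ S, X⟦(1 : ℤ)⟧ ∈ S) : smd S ⊆ S := by
  rintro X ⟨Y, hY, i, r, hir⟩
  have hQ : (∐ fun _ : ULift.{v} ℕ => Y) ∈ S := hc _ _ _ ⟨coproductIsCoproduct _⟩ fun _ => hY
  have hQX : ((∐ fun _ : ULift.{v} ℕ => Y) ⊞ X) ∈ S :=
    hc.mem_of_iso (biprod.uniqueUpToIso _ _ (swindleBiconeIsBilimit ⟨i, r, hir⟩)).symm hQ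
  exact hstar (mem_star_of_biprod hQX (hshift _ hQ))

/-- `Coprod(G(-∞,0])` is closed under direct summands, hence
`smd(Coprod(G(-∞,0])) = Coprod(G(-∞,0])`. -/
theorem coprodClosure_smd_closed [HasCoproducts.{v} C] (G : C) :
    smd (coprodClosure (shiftSetLE G 0)) ⊆ coprodClosure (shiftSetLE G 0) ∧
    smd (coprodClosure (shiftSetLE G 0)) = coprodClosure (shiftSetLE G 0) := by
  have hsmd := smd_subset_of_shift_mem (coprodClosed_coprodClosure (shiftSetLE G 0))
    (star_coprodClosure_subset _) fun _ => shift_mem_coprodClosure 1 fun _ hX =>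
      subset_coprodClosure _ (shift_mem_shiftSetLE hX zero_le_one)
  exact ⟨hsmd, hsmd.antisymm fun X hX => ⟨X, hX, 𝟙 X, 𝟙 X, Category.id_comp _⟩⟩

end GluePaper
end
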